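/- arXiv:2110.04355 — 3 statements merged into one kernel-verified Lean document; each statement's English description precedes it below -/
import Mathlib

section
/- Descent lemma for the ℓ1 merit function: if f : ℝⁿ → ℝ has L_f-Lipschitz gradient and each c_i : ℝⁿ → ℝ (i = 1,…,m) has (L_c)_i-Lipschitz gradient, then for φ(x) = f(x) + π‖c(x)‖₁ with π > 0, and for all x, d ∈ ℝⁿ and α ≥ 0: φ(x + αd) ≤ φ(x) + α g(x)ᵀd + π(‖c(x) + αJ(x)d‖₁ − ‖c(x)‖₁) + (1/2)(L_f + π‖L_c‖₁) α²‖d‖². -/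
/-!
Along the segment `t ↦ x + t • v`, the error of the first-order model of `h` has derivative
`⟪g (x + t • v) - g x, v⟫`, of absolute value at most `L t ‖v‖²` by the Lipschitz bound; comparing
with `L t² ‖v‖² / 2` gives the two-sided bound `|h (x + v) - h x - ⟪g x, v⟫| ≤ L ‖v‖² / 2`.
Its upper half bounds `f`; for each `c i` the triangle inequality turns it into
`|c i (x + α • d)| ≤ |c i x + α ⟪gc i x, d⟫| + |(L_c)_i| α² ‖d‖² / 2`, and these are summed with
weight `π ≥ 0`.
-/

open scoped RealInnerProductSpace

open Set

section

variable {E : Type*} [NormedAddCommGroup E] [InnerProductSpace ℝ E] [CompleteSpace E]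

theorem HasGradientAt.hasDerivAt_comp_add_smul {h : E → ℝ} {x v : E} {t : ℝ} {g' : E}
    (hh : HasGradientAt h g' (x + t • v)) :
    HasDerivAt (fun s : ℝ => h (x + s • v)) ⟪g', v⟫ t := by
  have hline : HasDerivAt (fun s : ℝ => x + s • v) v t := by
    simpa using ((hasDerivAt_id t).smul_const v).const_add x
  exact hh.hasFDerivAt.comp_hasDerivAt t hline

theorem abs_sub_sub_inner_le_of_lipschitz_gradient {h : E → ℝ} {g : E → E} {L : ℝ}
    (hh : ∀ x, HasGradientAt h (g x) x) (hL : ∀ x y, ‖g x - g y‖ ≤ L * ‖x - y‖) (x v : E) :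
    |h (x + v) - h x - ⟪g x, v⟫| ≤ L / 2 * ‖v‖ ^ 2 := by
  set F : ℝ → ℝ := fun t => h (x + t • v) - h x - t * ⟪g x, v⟫
  have hF : ∀ t, HasDerivAt F (⟪g (x + t • v), v⟫ - ⟪g x, v⟫) t := fun t =>
    (((hh _).hasDerivAt_comp_add_smul).sub_const (h x)).sub
      (by simpa using (hasDerivAt_id t).mul_const ⟪g x, v⟫)
  have hB : ∀ t, HasDerivAt (fun s => L / 2 * s ^ 2 * ‖v‖ ^ 2) (L * t * ‖v‖ ^ 2) t := fun t =>
    (((hasDerivAt_pow 2 t).const_mul (L / 2)).mul_const (‖v‖ ^ 2)).congr_deriv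
      (by simp only [Nat.cast_ofNat, Nat.add_one_sub_one, pow_one]; ring)
  have hF_bound : ∀ t ∈ Ico (0 : ℝ) 1, ‖⟪g (x + t • v), v⟫ - ⟪g x, v⟫‖ ≤ L * t * ‖v‖ ^ 2 := by
    intro t ht
    calc ‖⟪g (x + t • v), v⟫ - ⟪g x, v⟫‖ = |⟪g (x + t • v) - g x, v⟫| := by
          rw [inner_sub_left, Real.norm_eq_abs]
      _ ≤ ‖g (x + t • v) - g x‖ * ‖v‖ := abs_real_inner_le_norm _ _
      _ ≤ L * ‖t • v‖ * ‖v‖ := by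
          gcongr
          simpa using hL (x + t • v) x
      _ = L * t * ‖v‖ ^ 2 := by
          rw [norm_smul, Real.norm_of_nonneg ht.1]
          ring
  have hF_one := image_norm_le_of_norm_deriv_right_le_deriv_boundary (f := F)
    (fun t _ => (hF t).continuousAt.continuousWithinAt) (fun t _ => (hF t).hasDerivWithinAt)
    (by simp [F]) hB hF_bound (right_mem_Icc.2 zero_le_one)
  simpa [F] using hF_one

theorem abs_apply_add_smul_sub_le_of_lipschitz_gradient {h : E → ℝ} {g : E → E} {L : ℝ}
    (hh : ∀ x, HasGradientAt h (g x) x) (hL : ∀ x y, ‖g x - g y‖ ≤ L * ‖x - y‖)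
    (x d : E) (α : ℝ) :
    |h (x + α • d) - h x - α * ⟪g x, d⟫| ≤ L / 2 * α ^ 2 * ‖d‖ ^ 2 := by
  simpa [real_inner_smul_right, norm_smul, mul_pow, mul_assoc] using
    abs_sub_sub_inner_le_of_lipschitz_gradient hh hL x (α • d)

end

theorem stmt7_general {n m : ℕ}
    (f : EuclideanSpace ℝ (Fin n) → ℝ) (g : EuclideanSpace ℝ (Fin n) → EuclideanSpace ℝ (Fin n))
    (c : Fin m → EuclideanSpace ℝ (Fin n) → ℝ)
    (gc : Fin m → EuclideanSpace ℝ (Fin n) → EuclideanSpace ℝ (Fin n))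
    (Lf : ℝ) (Lc : Fin m → ℝ) (π : ℝ) (hπ : 0 < π)
    (hf : ∀ x, HasGradientAt f (g x) x)
    (hLf : ∀ x y, ‖g x - g y‖ ≤ Lf * ‖x - y‖)
    (hc : ∀ i x, HasGradientAt (c i) (gc i x) x)
    (hLc : ∀ i x y, ‖gc i x - gc i y‖ ≤ Lc i * ‖x - y‖)
    (φ : EuclideanSpace ℝ (Fin n) → ℝ)
    (hφ : ∀ x, φ x = f x + π * ∑ i, |c i x|)
    (x d : EuclideanSpace ℝ (Fin n)) (α : ℝ) :
    φ (x + α • d) ≤ φ x + α * ⟪g x, d⟫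
      + π * ((∑ i, |c i x + α * ⟪gc i x, d⟫|) - ∑ i, |c i x|)
      + 1 / 2 * (Lf + π * ∑ i, |Lc i|) * α ^ 2 * ‖d‖ ^ 2 := by
  have hf_le : f (x + α • d) - f x - α * ⟪g x, d⟫ ≤ Lf / 2 * α ^ 2 * ‖d‖ ^ 2 :=
    (abs_le.1 (abs_apply_add_smul_sub_le_of_lipschitz_gradient hf hLf x d α)).2
  have hc_le : ∀ i, |c i (x + α • d)| ≤
      |c i x + α * ⟪gc i x, d⟫| + |Lc i| / 2 * α ^ 2 * ‖d‖ ^ 2 := fun i => by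
    have hrem := abs_apply_add_smul_sub_le_of_lipschitz_gradient (hc i) (hLc i) x d α
    rw [sub_sub] at hrem
    have hL : Lc i / 2 * α ^ 2 * ‖d‖ ^ 2 ≤ |Lc i| / 2 * α ^ 2 * ‖d‖ ^ 2 := by
      gcongr
      exact le_abs_self _
    linarith [abs_sub_abs_le_abs_sub (c i (x + α • d)) (c i x + α * ⟪gc i x, d⟫)]
  have hsum : ∑ i, |c i (x + α • d)| ≤
      ∑ i, |c i x + α * ⟪gc i x, d⟫| + (∑ i, |Lc i|) / 2 * α ^ 2 * ‖d‖ ^ 2 := by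
    simpa only [Finset.sum_add_distrib, Finset.sum_div, Finset.sum_mul] using
      Finset.sum_le_sum fun i _ => hc_le i
  rw [hφ, hφ]
  linarith [mul_le_mul_of_nonneg_left hsum hπ.le]

/-- descent lemma for the ℓ1 merit function: if `f` has `L_f`-Lipschitz
gradient `g` and each component `c i` has `(L_c)_i`-Lipschitz gradient `gc i`, then for
`φ(x) = f(x) + π ‖c(x)‖₁` (with `π > 0`), all `x, d` and `α ≥ 0`:
`φ(x+αd) ≤ φ(x) + α⟪g(x),d⟫ + π(‖c(x)+αJ(x)d‖₁ − ‖c(x)‖₁) + ½(L_f + π‖L_c‖₁)α²‖d‖²`,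
where the `i`-th row of `J(x)` is `∇c_i(x)ᵀ`, i.e. `(J(x)d)_i = ⟪gc i x, d⟫`. -/
theorem stmt7 {n m : ℕ}
    (f : EuclideanSpace ℝ (Fin n) → ℝ) (g : EuclideanSpace ℝ (Fin n) → EuclideanSpace ℝ (Fin n))
    (c : Fin m → EuclideanSpace ℝ (Fin n) → ℝ)
    (gc : Fin m → EuclideanSpace ℝ (Fin n) → EuclideanSpace ℝ (Fin n))
    (Lf : ℝ) (Lc : Fin m → ℝ) (π : ℝ) (hπ : 0 < π)
    (hf : ∀ x, HasGradientAt f (g x) x)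
    (hLf : ∀ x y, ‖g x - g y‖ ≤ Lf * ‖x - y‖)
    (hc : ∀ i x, HasGradientAt (c i) (gc i x) x)
    (hLc : ∀ i x y, ‖gc i x - gc i y‖ ≤ Lc i * ‖x - y‖)
    (φ : EuclideanSpace ℝ (Fin n) → ℝ)
    (hφ : ∀ x, φ x = f x + π * ∑ i, |c i x|)
    (x d : EuclideanSpace ℝ (Fin n)) (α : ℝ) (hα : 0 ≤ α) :
    φ (x + α • d) ≤ φ x + α * ⟪g x, d⟫
      + π * ((∑ i, |c i x + α * ⟪gc i x, d⟫|) - ∑ i, |c i x|)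
      + 1 / 2 * (Lf + π * ∑ i, |Lc i|) * α ^ 2 * ‖d‖ ^ 2 :=
  stmt7_general f g c gc Lf Lc π hπ hf hLf hc hLc φ hφ x d α
end

section
/- Multiplier bound implies model descent: let d = −(1/β)P̃g̃ − J̃ᵀ(J̃J̃ᵀ)^{-1}c̃ with β > 0 and all quantities exact (ε_f = ε_c = ε_g = ε_J = 0, so g̃ = g, c̃ = c, J̃ = J, P̃ = P). If the penalty parameter satisfies π ≥ (1/(1−τ))‖(JJᵀ)^{-1}Jg‖_∞ for some τ ∈ (0,1), then ℓ(x; d) ≤ −(1/β)gᵀPg − τπ‖c‖₁, where ℓ(x; d) = gᵀd + π‖c + Jd‖₁ − π‖c‖₁. -/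
/-!
Since `J (I - Jᵀ(JJᵀ)⁻¹J) = 0`, the step satisfies `Jd = -c`, so the linearized constraint term
`π‖c + Jd‖₁` vanishes. With the least-squares multiplier `y = (JJᵀ)⁻¹Jg`, symmetry of `(JJᵀ)⁻¹`
gives `gᵀd = -(1/β)gᵀPg - yᵀc`, and Hölder's inequality `|yᵀc| ≤ ‖y‖_∞‖c‖₁ ≤ (1-τ)π‖c‖₁`
turns `-yᵀc - π‖c‖₁` into at most `-τπ‖c‖₁`.
-/

open Matrix

def l1 {m : ℕ} (v : Fin m → ℝ) : ℝ := ∑ i, |v i|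
noncomputable def linf {m : ℕ} (v : Fin m → ℝ) : ℝ := ⨆ i, |v i|

lemma l1_nonneg {m : ℕ} (v : Fin m → ℝ) : 0 ≤ l1 v :=
  Finset.sum_nonneg fun _ _ => abs_nonneg _

lemma l1_zero {m : ℕ} : l1 (0 : Fin m → ℝ) = 0 := by
  simp [l1]

lemma abs_le_linf {m : ℕ} (v : Fin m → ℝ) (i : Fin m) : |v i| ≤ linf v :=
  le_ciSup (f := fun j => |v j|) (Set.finite_range _).bddAbove i

lemma abs_dotProduct_le_linf_mul_l1 {m : ℕ} (v c : Fin m → ℝ) :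
    |v ⬝ᵥ c| ≤ linf v * l1 c :=
  calc |v ⬝ᵥ c| ≤ ∑ i, |v i * c i| := Finset.abs_sum_le_sum_abs _ _
    _ ≤ ∑ i, linf v * |c i| := Finset.sum_le_sum fun i _ => by
        rw [abs_mul]
        exact mul_le_mul_of_nonneg_right (abs_le_linf v i) (abs_nonneg _)
    _ = linf v * l1 c := by rw [l1, Finset.mul_sum]

section MinimumNormStep

variable {ι κ R : Type*} [Fintype ι] [Fintype κ] [DecidableEq ι] [CommRing R]
  {J : Matrix ι κ R}

lemma mul_transpose_mul_inv (hJ : IsUnit (J * Jᵀ).det) : J * (Jᵀ * (J * Jᵀ)⁻¹) = 1 := by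
  rw [← Matrix.mul_assoc, mul_nonsing_inv _ hJ]

lemma mul_one_sub_transpose_mul_inv_mul [DecidableEq κ] (hJ : IsUnit (J * Jᵀ).det) :
    J * (1 - Jᵀ * (J * Jᵀ)⁻¹ * J) = 0 := by
  rw [Matrix.mul_sub, Matrix.mul_one, ← Matrix.mul_assoc, mul_transpose_mul_inv hJ,
    Matrix.one_mul, sub_self]

lemma mulVec_sub_transpose_mul_inv_mulVec [DecidableEq κ] (hJ : IsUnit (J * Jᵀ).det) (s : R) (g : κ → R)
    (c : ι → R) :
    J *ᵥ (-(s • ((1 - Jᵀ * (J * Jᵀ)⁻¹ * J) *ᵥ g)) - (Jᵀ * (J * Jᵀ)⁻¹) *ᵥ c) = -c := by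
  rw [mulVec_sub, mulVec_neg, mulVec_smul, mulVec_mulVec, mulVec_mulVec,
    mul_one_sub_transpose_mul_inv_mul hJ, mul_transpose_mul_inv hJ, zero_mulVec, one_mulVec,
    smul_zero, neg_zero, zero_sub]

lemma dotProduct_transpose_mul_inv_mulVec (g : κ → R) (c : ι → R) :
    g ⬝ᵥ ((Jᵀ * (J * Jᵀ)⁻¹) *ᵥ c) = (((J * Jᵀ)⁻¹ * J) *ᵥ g) ⬝ᵥ c := by
  rw [dotProduct_mulVec, ← mulVec_transpose, transpose_mul, transpose_transpose,
    transpose_nonsing_inv, transpose_mul, transpose_transpose]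

end MinimumNormStep

theorem stmt10_general {m n : ℕ} (J : Matrix (Fin m) (Fin n) ℝ)
    (hdet : IsUnit (J * Jᵀ).det)
    (g : Fin n → ℝ) (c : Fin m → ℝ) (β τ π : ℝ)
    (hτ : τ ∈ Set.Ioo (0 : ℝ) 1)
    (P : Matrix (Fin n) (Fin n) ℝ) (hP : P = 1 - Jᵀ * (J * Jᵀ)⁻¹ * J)
    (d : Fin n → ℝ)
    (hd : d = -((1 / β) • (P *ᵥ g)) - (Jᵀ * (J * Jᵀ)⁻¹) *ᵥ c)
    (hπ : π ≥ (1 / (1 - τ)) * linf (((J * Jᵀ)⁻¹ * J) *ᵥ g)) :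
    g ⬝ᵥ d + π * l1 (c + J *ᵥ d) - π * l1 c
      ≤ -(1 / β) * (g ⬝ᵥ (P *ᵥ g)) - τ * π * l1 c := by
  set y := ((J * Jᵀ)⁻¹ * J) *ᵥ g
  have hJd : c + J *ᵥ d = 0 := by
    rw [hd, hP, mulVec_sub_transpose_mul_inv_mulVec hdet, add_neg_cancel]
  have hgd : g ⬝ᵥ d = -(1 / β) * (g ⬝ᵥ (P *ᵥ g)) - y ⬝ᵥ c := by
    rw [hd, dotProduct_sub, dotProduct_neg, dotProduct_smul, hP,
      dotProduct_transpose_mul_inv_mulVec, smul_eq_mul, neg_mul]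
  have hy : linf y ≤ (1 - τ) * π := by
    rwa [ge_iff_le, one_div, inv_mul_le_iff₀ (sub_pos.mpr hτ.2)] at hπ
  have hyc : -(y ⬝ᵥ c) ≤ (1 - τ) * π * l1 c :=
    calc -(y ⬝ᵥ c) ≤ linf y * l1 c := (neg_le_abs _).trans (abs_dotProduct_le_linf_mul_l1 y c)
      _ ≤ (1 - τ) * π * l1 c := mul_le_mul_of_nonneg_right hy (l1_nonneg c)
  rw [hgd, hJd, l1_zero]
  linarith

/-- multiplier bound implies model descent, exact case: with
`d = −(1/β)Pg − Jᵀ(JJᵀ)⁻¹c`, `P = I − Jᵀ(JJᵀ)⁻¹J`, `β > 0`, if the penalty parameter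
satisfies `π ≥ (1/(1−τ))‖(JJᵀ)⁻¹Jg‖_∞` with `τ ∈ (0,1)`, then
`ℓ(x;d) = gᵀd + π‖c + Jd‖₁ − π‖c‖₁ ≤ −(1/β) gᵀPg − τπ‖c‖₁`. -/
theorem stmt10 {m n : ℕ} (hmn : m < n) (J : Matrix (Fin m) (Fin n) ℝ)
    (hrank : J.rank = m) (hdet : IsUnit (J * Jᵀ).det)
    (g : Fin n → ℝ) (c : Fin m → ℝ) (β τ π : ℝ)
    (hβ : 0 < β) (hτ : τ ∈ Set.Ioo (0 : ℝ) 1)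
    (P : Matrix (Fin n) (Fin n) ℝ) (hP : P = 1 - Jᵀ * (J * Jᵀ)⁻¹ * J)
    (d : Fin n → ℝ)
    (hd : d = -((1 / β) • (P *ᵥ g)) - (Jᵀ * (J * Jᵀ)⁻¹) *ᵥ c)
    (hπ : π ≥ (1 / (1 - τ)) * linf (((J * Jᵀ)⁻¹ * J) *ᵥ g)) :
    g ⬝ᵥ d + π * l1 (c + J *ᵥ d) - π * l1 c
      ≤ -(1 / β) * (g ⬝ᵥ (P *ᵥ g)) - τ * π * l1 c :=
  stmt10_general J hdet g c β τ π hτ P hP d hd hπ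
end

section
/- Stabilization of the penalty parameter: let (λ_k) be a bounded sequence of nonnegative reals and define π_k recursively by π_k = π_{k−1} if π_{k−1} ≥ λ_k/(1−τ), and π_k = 2λ_k/(1−τ) otherwise, with π_{−1} > 0 and τ ∈ (0,1). Then (π_k) is nondecreasing and there exist k₀ ∈ ℕ and π̄ > 0 such that π_k = π̄ for all k ≥ k₀. -/
/-!
Each update either keeps `π` or replaces it by `2λ/(1-τ) > 2π`, so starting from `π₋₁ > 0` the
sequence is positive and nondecreasing, and every change at least doubles it. It is bounded by
`max π₋₁ (2M/(1-τ))`; once it exceeds half its supremum, a further change would overshoot the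
supremum, so it is constant from then on.
-/

open Set

section StayOrDouble

variable {u : ℕ → ℝ} (hpos : ∀ k, 0 < u k) (hstep : ∀ k, u (k + 1) = u k ∨ 2 * u k < u (k + 1))
include hpos hstep

theorem monotone_of_eq_or_two_mul_lt : Monotone u := by
  refine monotone_nat_of_le_succ fun k => ?_
  rcases hstep k with h | h
  · exact h.ge
  · linarith [hpos k]

theorem exists_forall_ge_eq_of_eq_or_two_mul_lt (hbdd : BddAbove (range u)) :
    ∃ k₀, ∀ k ≥ k₀, u k = u k₀ := by
  have hmono := monotone_of_eq_or_two_mul_lt hpos hstep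
  set L := ⨆ k, u k
  have hle : ∀ k, u k ≤ L := le_ciSup hbdd
  obtain ⟨k₀, hk₀⟩ : ∃ k₀, L / 2 < u k₀ :=
    exists_lt_of_lt_ciSup (by linarith [hpos 0, hle 0])
  have hconst : ∀ k ≥ k₀, u (k + 1) = u k := fun k hk =>
    (hstep k).resolve_right fun h => by linarith [hmono hk, hle (k + 1)]
  refine ⟨k₀, fun k hk => ?_⟩
  induction k, hk using Nat.le_induction with
  | base => rfl
  | succ k hk ih => rw [hconst k hk, ih]

end StayOrDouble

noncomputable def penaltyUpdate (τ l p : ℝ) : ℝ :=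
  if p ≥ l / (1 - τ) then p else 2 * l / (1 - τ)

theorem penaltyUpdate_eq_or_two_mul_lt (τ l p : ℝ) :
    penaltyUpdate τ l p = p ∨ 2 * p < penaltyUpdate τ l p := by
  unfold penaltyUpdate
  split_ifs with h
  · exact .inl rfl
  · right
    rw [mul_div_assoc]
    linarith

theorem penaltyUpdate_pos {τ l p : ℝ} (hp : 0 < p) : 0 < penaltyUpdate τ l p := by
  rcases penaltyUpdate_eq_or_two_mul_lt τ l p with h | h <;> linarith

theorem penaltyUpdate_le_max {τ l M : ℝ} (p : ℝ) (hτ : τ < 1) (hl : l ≤ M) :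
    penaltyUpdate τ l p ≤ max p (2 * M / (1 - τ)) := by
  unfold penaltyUpdate
  split_ifs
  · exact le_max_left _ _
  · exact le_max_of_le_right (by gcongr)

theorem stmt11_general (τ : ℝ) (hτ : τ ∈ Set.Ioo (0 : ℝ) 1)
    (lam : ℕ → ℝ) (M : ℝ) (hM : ∀ k, lam k ≤ M)
    (πinit : ℝ) (hπinit : 0 < πinit)
    (π : ℕ → ℝ)
    (hπ0 : π 0 = if πinit ≥ lam 0 / (1 - τ) then πinit else 2 * lam 0 / (1 - τ))
    (hπ : ∀ k, π (k + 1) =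
      if π k ≥ lam (k + 1) / (1 - τ) then π k else 2 * lam (k + 1) / (1 - τ)) :
    Monotone π ∧ ∃ k₀ : ℕ, ∃ πbar : ℝ, 0 < πbar ∧ ∀ k ≥ k₀, π k = πbar := by
  have hpos : ∀ k, 0 < π k := by
    intro k
    induction k with
    | zero => rw [hπ0]; exact penaltyUpdate_pos hπinit
    | succ k ih => rw [hπ k]; exact penaltyUpdate_pos ih
  have hstep : ∀ k, π (k + 1) = π k ∨ 2 * π k < π (k + 1) := fun k => by
    rw [hπ k]; exact penaltyUpdate_eq_or_two_mul_lt _ _ _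
  have hbdd : BddAbove (range π) := by
    refine ⟨max πinit (2 * M / (1 - τ)), forall_mem_range.2 fun k => ?_⟩
    induction k with
    | zero => rw [hπ0]; exact penaltyUpdate_le_max _ hτ.2 (hM 0)
    | succ k ih =>
      rw [hπ k]
      exact (penaltyUpdate_le_max _ hτ.2 (hM _)).trans (max_le ih (le_max_right _ _))
  obtain ⟨k₀, hk₀⟩ := exists_forall_ge_eq_of_eq_or_two_mul_lt hpos hstep hbdd
  exact ⟨monotone_of_eq_or_two_mul_lt hpos hstep, k₀, π k₀, hpos k₀, hk₀⟩

/-- stabilization of the penalty parameter: let `(λ_k)` be a bounded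
sequence of nonnegative reals, `τ ∈ (0,1)`, `π₋₁ > 0`, and define
`π_k = π_{k−1}` if `π_{k−1} ≥ λ_k/(1−τ)`, and `π_k = 2λ_k/(1−τ)` otherwise.
Then `(π_k)` is nondecreasing and eventually constant equal to some `π̄ > 0`. -/
theorem stmt11 (τ : ℝ) (hτ : τ ∈ Set.Ioo (0 : ℝ) 1)
    (lam : ℕ → ℝ) (hlam : ∀ k, 0 ≤ lam k) (M : ℝ) (hM : ∀ k, lam k ≤ M)
    (πinit : ℝ) (hπinit : 0 < πinit)
    (π : ℕ → ℝ)
    (hπ0 : π 0 = if πinit ≥ lam 0 / (1 - τ) then πinit else 2 * lam 0 / (1 - τ))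
    (hπ : ∀ k, π (k + 1) =
      if π k ≥ lam (k + 1) / (1 - τ) then π k else 2 * lam (k + 1) / (1 - τ)) :
    Monotone π ∧ ∃ k₀ : ℕ, ∃ πbar : ℝ, 0 < πbar ∧ ∀ k ≥ k₀, π k = πbar :=
  stmt11_general τ hτ lam M hM πinit hπinit π hπ0 hπ
end
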